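/- arXiv:1801.02262 — 4 statements merged into one kernel-verified Lean document; each statement's English description precedes it below -/
import Mathlib

section
/- If a magic n-gon exists (n ≥ 3), then the sum of all numbers placed at nodes other than the center equals 2n² + 2n. -/
/-- A magic `n`-gon: values `v i` at vertices, `m i` at the midpoint of the side
between `v i` and `v (i+1)`, and `c` at the center, all drawn injectively from
`{1, ..., 2n+1}`, such that every side sums to `s` and every diagonal (through
the center) sums to `s`.  For even `n` the diagonals join opposite vertices and
opposite midpoints; for odd `n` they join each vertex to the opposite midpoint. -/
def IsMagicNGon (n : ℕ) [NeZero n] (v m : ZMod n → ℕ) (c s : ℕ) : Prop :=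
  Function.Injective (Sum.elim v (Sum.elim m (fun _ : Unit => c))) ∧
  (∀ i, v i ∈ Finset.Icc 1 (2 * n + 1)) ∧
  (∀ i, m i ∈ Finset.Icc 1 (2 * n + 1)) ∧
  c ∈ Finset.Icc 1 (2 * n + 1) ∧
  (∀ i, v i + m i + v (i + 1) = s) ∧
  (if n % 2 = 0
    then ∀ i, v i + c + v (i + (n / 2 : ℕ)) = s ∧ m i + c + m (i + (n / 2 : ℕ)) = s
    else ∀ i, v i + c + m (i + (n / 2 : ℕ)) = s)

/-! Summing the side equations gives `2V + M = n s`, where `V` and `M` are the vertex and midpoint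
totals. For even `n`, summing the two families of diagonals gives `2V + n c = n s = 2M + n c`, hence
`V = M = n c`, and `V + M + c = (2n+1)(n+1)` forces `c = n + 1`.

For odd `n` there is no magic `n`-gon: eliminating the midpoints gives
`v i + v (i+1) = v (i - n/2) + c`, which makes `v` 3-periodic, so `3 = 0` in `ZMod n`; then
`i - n/2 = i + 2` and the vertex `v 2` carries the center value `c`. -/

open Finset Function

lemma sum_comp_eq_sum_of_injective {α β M : Type*} [Fintype α] [AddCommMonoid M] {f : α → β}
    (hf : Injective f) {t : Finset β} (hft : ∀ a, f a ∈ t) (hcard : #t ≤ Fintype.card α)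
    (g : β → M) : ∑ a, g (f a) = ∑ b ∈ t, g b :=
  sum_nbij f (fun a _ => hft a) hf.injOn
    (surjOn_of_injOn_of_card_le f (fun a _ => hft a) hf.injOn hcard) fun _ _ => rfl

lemma sum_Icc_one_id_mul_two (N : ℕ) : (∑ x ∈ Icc 1 N, x) * 2 = N * (N + 1) := by
  induction N with
  | zero => simp
  | succ N ih =>
    rw [sum_Icc_succ_top (by omega), add_mul, ih]
    ring

lemma sum_add_sum_add_sum_comp_add_right {G M : Type*} [AddGroup G] [Fintype G]
    [AddCommMonoid M] {f g h : G → M} {a : G} {s : M} (hline : ∀ i, f i + g i + h (i + a) = s) :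
    ∑ i, f i + ∑ i, g i + ∑ i, h i = Fintype.card G • s := by
  rw [← Equiv.sum_comp (Equiv.addRight a) h, ← sum_add_distrib, ← sum_add_distrib]
  simp [hline]

section OddRecurrence

variable {R : Type*} [CommRing R] {v : R → ℕ} {c : ℕ} {k : R}

lemma add_add_eq_three_mul_of_add_eq (hk : k + k + 1 = 0)
    (hv : ∀ i, v i + v (i + 1) = v (i - k) + c) (j : R) :
    v j + v (j + 1) + v (j + 2) = 3 * c := by
  have h₀ := hv j
  have h₁ := hv (j + 1)
  have h₂ := hv (j - k)
  rw [show j - k + 1 = j + 1 - k by ring, show j - k - k = j + 1 by linear_combination -hk] at h₂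
  rw [show j + 1 + 1 = j + 2 by ring] at h₁
  omega

lemma apply_two_eq_of_add_eq (hinj : Injective v) (hk : k + k + 1 = 0)
    (hv : ∀ i, v i + v (i + 1) = v (i - k) + c) : v 2 = c := by
  have htriple := add_add_eq_three_mul_of_add_eq hk hv
  have h₀ := htriple 0
  simp only [zero_add] at h₀
  have hthree : (3 : R) = 0 := by
    have h₁ := htriple 1
    rw [one_add_one_eq_two, show (1 : R) + 2 = 3 by ring] at h₁
    exact (hinj (a₁ := 0) (a₂ := 3) (by omega)).symm
  have hrec := hv 0
  rw [zero_add, show 0 - k = 2 by linear_combination -(k + 1) * hthree + hk] at hrec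
  omega

end OddRecurrence

lemma ZMod.natCast_half_add_half_add_one {n : ℕ} (hn : Odd n) :
    ((n / 2 : ℕ) : ZMod n) + (n / 2 : ℕ) + 1 = 0 := by
  have : n / 2 + n / 2 + 1 = n := by obtain ⟨r, rfl⟩ := hn; omega
  simpa using congrArg (Nat.cast : ℕ → ZMod n) this

namespace IsMagicNGon

variable {n : ℕ} [NeZero n] {v m : ZMod n → ℕ} {c s : ℕ}

lemma total_mul_two (h : IsMagicNGon n v m c s) :
    (∑ i, v i + (∑ i, m i + c)) * 2 = (2 * n + 1) * (2 * n + 2) := by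
  obtain ⟨hinj, hv, hm, hc, -⟩ := h
  have hcard : #(Icc 1 (2 * n + 1)) ≤ Fintype.card (ZMod n ⊕ (ZMod n ⊕ Unit)) := by
    simp only [Nat.card_Icc, Fintype.card_sum, ZMod.card, Fintype.card_unique]
    omega
  have htotal := sum_comp_eq_sum_of_injective hinj
    (by rintro (i | i | ⟨⟩); exacts [hv i, hm i, hc]) hcard id
  simp only [Fintype.sum_sum_type, Sum.elim_inl, Sum.elim_inr, id, univ_unique,
    sum_singleton] at htotal
  rw [htotal, sum_Icc_one_id_mul_two]

lemma sum_sides (h : IsMagicNGon n v m c s) : 2 * ∑ i, v i + ∑ i, m i = n * s := by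
  have := sum_add_sum_add_sum_comp_add_right h.2.2.2.2.1
  rw [ZMod.card, smul_eq_mul] at this
  omega

lemma even (h : IsMagicNGon n v m c s) : Even n := by
  by_contra hodd
  rw [Nat.not_even_iff_odd] at hodd
  obtain ⟨hinj, -, -, -, hside, hdiag⟩ := h
  rw [if_neg (by simpa [Nat.odd_iff] using hodd)] at hdiag
  have hrec : ∀ i, v i + v (i + 1) = v (i - (n / 2 : ℕ)) + c := by
    intro i
    have := hdiag (i - (n / 2 : ℕ))
    rw [sub_add_cancel] at this
    have := hside i
    omega
  have hv2 := apply_two_eq_of_add_eq (hinj.comp Sum.inl_injective)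
    (ZMod.natCast_half_add_half_add_one hodd) hrec
  exact Sum.inl_ne_inr (@hinj (Sum.inl 2) (Sum.inr (Sum.inr ())) hv2)

lemma sum_diagonals (h : IsMagicNGon n v m c s) :
    2 * ∑ i, v i + n * c = n * s ∧ 2 * ∑ i, m i + n * c = n * s := by
  have hdiag := h.2.2.2.2.2
  rw [if_pos (Nat.even_iff.mp h.even)] at hdiag
  have hv := sum_add_sum_add_sum_comp_add_right fun i => (hdiag i).1
  have hm := sum_add_sum_add_sum_comp_add_right fun i => (hdiag i).2
  simp only [sum_const, card_univ, ZMod.card, smul_eq_mul] at hv hm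
  constructor <;> linarith

end IsMagicNGon

theorem sum_noncenter_general (n : ℕ) [NeZero n] (v m : ZMod n → ℕ) (c s : ℕ)
    (h : IsMagicNGon n v m c s) :
    (∑ i : ZMod n, v i) + (∑ i : ZMod n, m i) = 2 * n ^ 2 + 2 * n := by
  have hsides := h.sum_sides
  obtain ⟨hdiag_v, hdiag_m⟩ := h.sum_diagonals
  have hm : ∑ i, m i = n * c := by linarith
  have hv : ∑ i, v i = n * c := by linarith
  have hc : c = n + 1 := by
    have htotal := h.total_mul_two
    rw [hv, hm] at htotal
    have : (2 * n + 1) * (2 * c) = (2 * n + 1) * (2 * n + 2) := by linarith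
    have := Nat.eq_of_mul_eq_mul_left (by omega) this
    omega
  rw [hv, hm, hc]
  ring

theorem sum_noncenter (n : ℕ) [NeZero n] (hn : 3 ≤ n) (v m : ZMod n → ℕ) (c s : ℕ)
    (h : IsMagicNGon n v m c s) :
    (∑ i : ZMod n, v i) + (∑ i : ZMod n, m i) = 2 * n ^ 2 + 2 * n :=
  sum_noncenter_general n v m c s h
end

section
/- For every odd n ≥ 3, no magic n-gon exists. -/
namespace ZMod

variable {n : ℕ}

theorem eq_zero_of_add_add_two_eq_add_one (hodd : Odd n) (a : ZMod n → ℤ)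
    (ha : ∀ x, a x + a (x + 2) = a (x + 1)) : a = 0 := by
  have step : ∀ x, a (x + 3) = -a x := fun x => by
    have h1 := ha (x + 1)
    rw [show x + 1 + 2 = x + 3 by ring, show x + 1 + 1 = x + 2 by ring] at h1
    linarith [ha x]
  have iter : ∀ j : ℕ, ∀ x, a (x + 3 * j) = (-1) ^ j * a x := by
    intro j
    induction j with
    | zero => simp
    | succ j ih =>
      intro x
      rw [show x + 3 * ((j + 1 : ℕ) : ZMod n) = x + 3 * j + 3 by push_cast; ring, step, ih]
      ring
  funext x
  have hx := iter n x
  rw [ZMod.natCast_self, mul_zero, add_zero, hodd.neg_one_pow] at hx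
  simp only [Pi.zero_apply]
  linarith

theorem eq_zero_of_add_add_one_eq_add_half (hodd : Odd n) (w : ZMod n → ℤ) (h : ZMod n)
    (h2 : 2 * h = 1) (hw : ∀ i, w i + w (i + 1) = w (i + h)) : w = 0 := by
  have ha := eq_zero_of_add_add_two_eq_add_one hodd (fun t => w (t * h)) fun t => by
    simpa only [add_mul, h2, one_mul] using hw (t * h)
  funext i
  simpa only [mul_assoc, h2, mul_one, Pi.zero_apply] using congrFun ha (i * 2)

end ZMod

theorem IsMagicNGon.vertex_add_vertex_succ {n : ℕ} [NeZero n] (hodd : Odd n)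
    {v m : ZMod n → ℕ} {c s : ℕ} (hmagic : IsMagicNGon n v m c s) (i : ZMod n) :
    v i + v (i + 1) = c + v (i - (n / 2 : ℕ)) := by
  obtain ⟨-, -, -, -, hside, hdiag⟩ := hmagic
  rw [if_neg (by rw [Nat.odd_iff.mp hodd]; decide)] at hdiag
  have hd := hdiag (i - (n / 2 : ℕ))
  rw [sub_add_cancel] at hd
  linarith [hside i]

theorem no_odd_magic_ngon_general (n : ℕ) [NeZero n] (hodd : Odd n) :
    ¬ ∃ (v m : ZMod n → ℕ) (c s : ℕ), IsMagicNGon n v m c s := by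
  rintro ⟨v, m, c, s, hmagic⟩
  have half : 2 * -((n / 2 : ℕ) : ZMod n) = 1 := by
    have hn : ((2 * (n / 2) + 1 : ℕ) : ZMod n) = 0 := by
      rw [Nat.two_mul_div_two_add_one_of_odd hodd, ZMod.natCast_self]
    push_cast at hn
    linear_combination -hn
  have hoffset := ZMod.eq_zero_of_add_add_one_eq_add_half hodd (fun i => (v i : ℤ) - c) _ half
    fun i => by
      have := hmagic.vertex_add_vertex_succ hodd i
      rw [← sub_eq_add_neg]
      omega
  have hv0 : v 0 = c := by simpa [sub_eq_zero] using congrFun hoffset 0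
  exact absurd (hmagic.1 (a₁ := .inl 0) (a₂ := .inr (.inr ())) hv0) (by simp)

theorem no_odd_magic_ngon (n : ℕ) [NeZero n] (hn : 3 ≤ n) (hodd : Odd n) :
    ¬ ∃ (v m : ZMod n → ℕ) (c s : ℕ), IsMagicNGon n v m c s :=
  no_odd_magic_ngon_general n hodd
end

section
/- For even n ≥ 6, define f* on all 2n+1 nodes by: f*(v_i) = f(v_i) for 1 ≤ i ≤ n/2, f*(v_{n/2+i}) = 2n+2 - f*(v_i) for 1 ≤ i ≤ n/2, f*(m_i) = 3n+3 - f*(v_i) - f*(v_{i+1}) (indices mod n, v_{n+1} = v_1), and f*(c) = n+1. Then every diagonal pair satisfies f*(v_i) + f*(v_{n/2+i}) = 2n+2 and f*(m_i) + f*(m_{n/2+i}) = 2n+2 for all 1 ≤ i ≤ n/2. -/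
/-!
Antipodal vertices carry complementary labels `a ↦ 2n+2 - a` by construction, and since `n` is
even the antipode of the edge `v_i v_{i+1}` is the edge between the antipodes, including the
wrap-around edge `v_{n/2} v_{n/2+1} ↦ v_n v_1`. Complementing both endpoint labels `a, b` turns
the midpoint label `3n+3 - a - b` into `a + b - (n+1)`, so the two midpoint labels add up to
`2n+2`, provided `n+1 ≤ a + b ≤ 3n+3` (no truncated subtraction); for the edge
`v_{n/2} v_{n/2+1}` this bound needs `n ≥ 6`.
-/

/-- The construction map on the first `n/2` vertices. -/
def fval (n i : ℕ) : ℕ :=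
  if i = 1 then n - 1
  else if i = 2 then 2 * n + 1
  else if i % 2 = 0 then n + i
  else i - 1

/-- The extended vertex labeling `f*` on all vertices `1 ≤ i ≤ n`. -/
def fv (n i : ℕ) : ℕ :=
  if i ≤ n / 2 then fval n i else 2 * n + 2 - fval n (i - n / 2)

/-- The midpoint labeling `f*(m_i) = 3n+3 - f*(v_i) - f*(v_{i+1})`, with `v_{n+1} = v_1`. -/
def fm (n i : ℕ) : ℕ :=
  3 * n + 3 - fv n i - fv n (if i = n then 1 else i + 1)

def nextVertex (n i : ℕ) : ℕ := if i = n then 1 else i + 1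

theorem fm_eq (n i : ℕ) : fm n i = 3 * n + 3 - fv n i - fv n (nextVertex n i) := rfl

theorem nextVertex_of_lt {n i : ℕ} (h : i < n) : nextVertex n i = i + 1 := if_neg h.ne

theorem fval_le {n i : ℕ} (h : i ≤ n / 2) : fval n i ≤ 2 * n + 1 := by
  unfold fval; split_ifs <;> omega

theorem fval_one (n : ℕ) : fval n 1 = n - 1 := rfl

theorem fval_half_le {n : ℕ} (hn : 6 ≤ n) : fval n (n / 2) ≤ 2 * n := by
  unfold fval; split_ifs <;> omega

theorem fval_add_fval_succ_mem {n j : ℕ} (h1 : 1 ≤ j) (h2 : j + 1 ≤ n / 2) :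
    n + 1 ≤ fval n j + fval n (j + 1) ∧ fval n j + fval n (j + 1) ≤ 3 * n + 3 := by
  unfold fval; split_ifs <;> omega

theorem fv_of_le {n i : ℕ} (h : i ≤ n / 2) : fv n i = fval n i := if_pos h

theorem fv_le (n i : ℕ) : fv n i ≤ 2 * n + 2 := by
  unfold fv
  split_ifs with h
  · exact (fval_le h).trans (Nat.le_succ _)
  · exact Nat.sub_le _ _

theorem fv_half_add {n i : ℕ} (h1 : 1 ≤ i) : fv n (n / 2 + i) = 2 * n + 2 - fval n i := by
  rw [fv, if_neg (by omega), Nat.add_sub_cancel_left]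

theorem fv_half_add_eq {n i : ℕ} (h1 : 1 ≤ i) (h2 : i ≤ n / 2) :
    fv n (n / 2 + i) = 2 * n + 2 - fv n i := by
  rw [fv_half_add h1, fv_of_le h2]

theorem fv_nextVertex_half_add_eq {n i : ℕ} (hev : n % 2 = 0) (h1 : 1 ≤ i) (h2 : i ≤ n / 2) :
    fv n (nextVertex n (n / 2 + i)) = 2 * n + 2 - fv n (nextVertex n i) := by
  rcases h2.lt_or_eq with hlt | rfl
  · rw [nextVertex_of_lt (by omega), nextVertex_of_lt (by omega), add_assoc,
      fv_half_add_eq (by omega) (by omega)]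
  · have hwrap : nextVertex n (n / 2 + n / 2) = 1 := if_pos (by omega)
    rw [hwrap, nextVertex_of_lt (by omega), fv_half_add le_rfl, fv_of_le (by omega)]
    have := fval_le (n := n) (i := 1) (by omega)
    omega

theorem fv_add_fv_nextVertex_mem {n i : ℕ} (hn : 6 ≤ n) (h1 : 1 ≤ i) (h2 : i ≤ n / 2) :
    n + 1 ≤ fv n i + fv n (nextVertex n i) ∧ fv n i + fv n (nextVertex n i) ≤ 3 * n + 3 := by
  rcases h2.lt_or_eq with hlt | rfl
  · rw [nextVertex_of_lt (by omega), fv_of_le h2, fv_of_le hlt]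
    exact fval_add_fval_succ_mem h1 hlt
  · rw [nextVertex_of_lt (by omega), fv_of_le le_rfl, fv_half_add le_rfl, fval_one]
    have := fval_half_le hn
    omega

theorem midpoint_label_complement {n a b : ℕ} (ha : a ≤ 2 * n + 2) (hb : b ≤ 2 * n + 2)
    (hlo : n + 1 ≤ a + b) (hhi : a + b ≤ 3 * n + 3) :
    3 * n + 3 - a - b + (3 * n + 3 - (2 * n + 2 - a) - (2 * n + 2 - b)) = 2 * n + 2 := by
  omega

theorem diagonal_pair_sums (n : ℕ) (hev : n % 2 = 0) (hn : 6 ≤ n) :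
    ∀ i : ℕ, 1 ≤ i → i ≤ n / 2 →
      fv n i + fv n (n / 2 + i) = 2 * n + 2 ∧ fm n i + fm n (n / 2 + i) = 2 * n + 2 := by
  intro i h1 h2
  have hvi := fv_le n i
  refine ⟨by rw [fv_half_add_eq h1 h2]; omega, ?_⟩
  obtain ⟨hlo, hhi⟩ := fv_add_fv_nextVertex_mem hn h1 h2
  rw [fm_eq, fm_eq, fv_half_add_eq h1 h2, fv_nextVertex_half_add_eq hev h1 h2]
  exact midpoint_label_complement hvi (fv_le n _) hlo hhi
end

section
/- For every even n ≥ 4, a magic n-gon exists. -/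
/-!
Write `n = 2h`, put `n + 1` at the centre and label antipodally: the vertex opposite a vertex
labelled `x` gets `2(n + 1) - x`. Then the vertex diagonals sum to `3(n + 1)`; labelling each
midpoint by `3(n + 1)` minus its two neighbours makes the sides sum to `3(n + 1)`, and the
midpoints inherit the antipodal symmetry, so their diagonals sum to `3(n + 1)` as well.
Since the labels come in pairs `x, 2(n + 1) - x` around the centre label `n + 1`, they form a
bijection onto `{1, …, 2n + 1}` as soon as they cover `{1, …, n}`, which is arithmetic about
the labels of the first `h` vertices and the sums of adjacent ones.
-/

open Finset Function

namespace MagicNGon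

theorem injective_and_mem_of_subset_range {α β : Type*} [Fintype α] [DecidableEq β]
    {f : α → β} {s : Finset β} (hcard : #s = Fintype.card α)
    (hs : (s : Set β) ⊆ Set.range f) : Injective f ∧ ∀ x, f x ∈ s := by
  have hsub : s ⊆ univ.image f := fun b hb => by
    obtain ⟨x, rfl⟩ := hs hb
    exact mem_image_of_mem f (mem_univ x)
  have himage : univ.image f = s :=
    eq_of_superset_of_card_ge hsub (card_image_le.trans (by rw [hcard, card_univ]))
  refine ⟨fun x y hxy => ?_, fun x => himage ▸ mem_image_of_mem f (mem_univ x)⟩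
  exact injOn_of_card_image_eq (by rw [himage, hcard, card_univ]) (mem_univ x) (mem_univ y) hxy

section Antipodal

variable {n : ℕ}

def midLabel (c : ℕ) (v : ZMod n → ℕ) (i : ZMod n) : ℕ := 3 * c - v i - v (i + 1)

variable {a : ZMod n} {c : ℕ} {v : ZMod n → ℕ}

theorem midLabel_add_midLabel_add (hv : ∀ i, v i + v (i + a) = 2 * c)
    (hS : ∀ i, v i + v (i + 1) ≤ 3 * c) (i : ZMod n) :
    midLabel c v i + midLabel c v (i + a) = 2 * c := by
  have := hv i
  have hsucc := hv (i + 1)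
  rw [add_right_comm] at hsucc
  have := hS i
  have := hS (i + a)
  unfold midLabel
  omega

theorem Icc_subset_range_of_antipodal {m : ZMod n → ℕ} (hv : ∀ i, v i + v (i + a) = 2 * c)
    (hm : ∀ i, m i + m (i + a) = 2 * c)
    (hlow : ∀ t, 1 ≤ t → t < c → t ∈ Set.range v ∨ t ∈ Set.range m) :
    (Icc 1 (2 * c - 1) : Set ℕ) ⊆ Set.range (Sum.elim v (Sum.elim m fun _ : Unit => c)) := by
  intro t ht
  simp only [coe_Icc, Set.mem_Icc] at ht
  simp only [Set.Sum.elim_range, Set.mem_union, Set.range_const, Set.mem_singleton_iff]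
  rcases lt_trichotomy t c with hlt | rfl | hgt
  · exact (hlow t ht.1 hlt).imp_right .inl
  · exact .inr (.inr rfl)
  · rcases hlow (2 * c - t) (by omega) (by omega) with ⟨i, hi⟩ | ⟨i, hi⟩
    · exact .inl ⟨i + a, by have := hv i; omega⟩
    · exact .inr (.inl ⟨i + a, by have := hm i; omega⟩)

end Antipodal

section HalfExtension

variable {n h : ℕ} {c : ℕ} {L : ℕ → ℕ}

def antipodalExtension (h c : ℕ) (L : ℕ → ℕ) (i : ZMod n) : ℕ :=
  if i.val < h then L i.val else 2 * c - L (i.val - h)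

def adjacentSum (h c : ℕ) (L : ℕ → ℕ) (j : ℕ) : ℕ :=
  L j + if j + 1 < h then L (j + 1) else 2 * c - L 0

variable (hn : n = 2 * h)
include hn

theorem antipodalExtension_natCast {j : ℕ} (hj : j < h) :
    antipodalExtension h c L (j : ZMod n) = L j := by
  rw [antipodalExtension, ZMod.val_natCast_of_lt (by omega), if_pos hj]

theorem antipodalExtension_natCast_add {j : ℕ} (hj : j < h) :
    antipodalExtension h c L ((j : ZMod n) + (h : ZMod n)) = 2 * c - L j := by
  rw [antipodalExtension, ← Nat.cast_add, ZMod.val_natCast_of_lt (by omega), if_neg (by omega),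
    Nat.add_sub_cancel]

theorem exists_lt_eq_natCast_or_eq_natCast_add [NeZero n] (i : ZMod n) :
    ∃ j < h, i = j ∨ i = j + (h : ZMod n) := by
  have hi := ZMod.val_lt i
  by_cases hlt : i.val < h
  · exact ⟨i.val, hlt, .inl (ZMod.natCast_zmod_val i).symm⟩
  · refine ⟨i.val - h, by omega, .inr ?_⟩
    rw [← Nat.cast_add, Nat.sub_add_cancel (by omega), ZMod.natCast_zmod_val]

theorem natCast_add_half_add_half (j : ℕ) : (j : ZMod n) + h + h = (j : ZMod n) := by
  rw [add_assoc, ← Nat.cast_add, ← two_mul, ← hn, ZMod.natCast_self, add_zero]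

theorem antipodalExtension_add_antipodalExtension_add [NeZero n] (hL : ∀ j < h, L j ≤ 2 * c)
    (i : ZMod n) :
    antipodalExtension h c L i + antipodalExtension h c L (i + (h : ZMod n)) = 2 * c := by
  obtain ⟨j, hj, rfl | rfl⟩ := exists_lt_eq_natCast_or_eq_natCast_add hn i
  · rw [antipodalExtension_natCast hn hj, antipodalExtension_natCast_add hn hj]
    have := hL j hj
    omega
  · rw [natCast_add_half_add_half hn, antipodalExtension_natCast hn hj,
      antipodalExtension_natCast_add hn hj]
    have := hL j hj
    omega

theorem antipodalExtension_add_antipodalExtension_succ {j : ℕ} (hj : j < h) :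
    antipodalExtension h c L (j : ZMod n) + antipodalExtension h c L ((j : ZMod n) + 1) =
      adjacentSum h c L j := by
  rw [adjacentSum, antipodalExtension_natCast hn hj]
  split_ifs with hsucc
  · rw [← Nat.cast_add_one, antipodalExtension_natCast hn hsucc]
  · rw [show (j : ZMod n) + 1 = ((0 : ℕ) : ZMod n) + h by
      rw [Nat.cast_zero, zero_add, ← Nat.cast_add_one, show j + 1 = h by omega]]
    rw [antipodalExtension_natCast_add hn (by omega)]

theorem antipodalExtension_add_antipodalExtension_add_one_le [NeZero n]
    (hL : ∀ j < h, L j ≤ 2 * c)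
    (hsum : ∀ j < h, c ≤ adjacentSum h c L j ∧ adjacentSum h c L j ≤ 3 * c)
    (i : ZMod n) : antipodalExtension h c L i + antipodalExtension h c L (i + 1) ≤ 3 * c := by
  obtain ⟨j, hj, rfl | rfl⟩ := exists_lt_eq_natCast_or_eq_natCast_add hn i
  · exact antipodalExtension_add_antipodalExtension_succ hn hj ▸ (hsum j hj).2
  · -- adjacent sums in the second half are `4 c` minus those in the first
    have := antipodalExtension_add_antipodalExtension_add hn hL (j + 1)
    rw [add_right_comm] at this
    have := antipodalExtension_add_antipodalExtension_add hn hL j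
    have := antipodalExtension_add_antipodalExtension_succ hn hj (c := c) (L := L)
    have := hsum j hj
    omega

end HalfExtension

theorem isMagicNGon_antipodalExtension {n h : ℕ} [NeZero n] (hn : n = 2 * h) {L : ℕ → ℕ}
    (hL : ∀ j < h, L j ≤ 2 * (n + 1))
    (hsum : ∀ j < h,
      n + 1 ≤ adjacentSum h (n + 1) L j ∧ adjacentSum h (n + 1) L j ≤ 3 * (n + 1))
    (hcover : ∀ t, 1 ≤ t → t ≤ n → ∃ j < h, L j = t ∨ 2 * (n + 1) - L j = t ∨
      3 * (n + 1) - adjacentSum h (n + 1) L j = t ∨ adjacentSum h (n + 1) L j - (n + 1) = t) :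
    IsMagicNGon n (antipodalExtension h (n + 1) L)
      (midLabel (n + 1) (antipodalExtension h (n + 1) L)) (n + 1) (3 * (n + 1)) := by
  set v : ZMod n → ℕ := antipodalExtension h (n + 1) L
  have hv : ∀ i, v i + v (i + h) = 2 * (n + 1) :=
    antipodalExtension_add_antipodalExtension_add hn hL
  have hvj {j : ℕ} (hj : j < h) : v j = L j := antipodalExtension_natCast hn hj
  have hvj' {j : ℕ} (hj : j < h) : v (j + h) = 2 * (n + 1) - L j :=
    antipodalExtension_natCast_add hn hj
  have hsj {j : ℕ} (hj : j < h) : v j + v (j + 1) = adjacentSum h (n + 1) L j :=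
    antipodalExtension_add_antipodalExtension_succ hn hj
  have hS : ∀ i, v i + v (i + 1) ≤ 3 * (n + 1) :=
    antipodalExtension_add_antipodalExtension_add_one_le hn hL hsum
  have hm := midLabel_add_midLabel_add hv hS
  have hlow : ∀ t, 1 ≤ t → t < n + 1 →
      t ∈ Set.range v ∨ t ∈ Set.range (midLabel (n + 1) v) := by
    intro t ht1 ht
    obtain ⟨j, hj, hjt⟩ := hcover t ht1 (by omega)
    have hmj : midLabel (n + 1) v j = 3 * (n + 1) - adjacentSum h (n + 1) L j := by
      rw [midLabel, Nat.sub_sub, hsj hj]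
    rcases hjt with hjt | hjt | hjt | hjt
    · exact .inl ⟨j, (hvj hj).trans hjt⟩
    · exact .inl ⟨j + h, (hvj' hj).trans hjt⟩
    · exact .inr ⟨j, hmj.trans hjt⟩
    · have := hm j
      have := hsum j hj
      exact .inr ⟨j + h, by omega⟩
  have hrange := Icc_subset_range_of_antipodal hv hm hlow
  rw [show 2 * (n + 1) - 1 = 2 * n + 1 by omega] at hrange
  obtain ⟨hinj, hmem⟩ := injective_and_mem_of_subset_range
    (by simp only [Nat.card_Icc, Fintype.card_sum, ZMod.card, Fintype.card_unit]; omega) hrange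
  refine ⟨hinj, fun i => hmem (.inl i), fun i => hmem (.inr (.inl i)), hmem (.inr (.inr ())),
    fun i => ?_, ?_⟩
  · have := hS i
    unfold midLabel
    omega
  · rw [if_pos (by omega), show n / 2 = h by omega]
    exact fun i => ⟨by have := hv i; omega, by have := hm i; omega⟩

section Construction

variable {n h : ℕ}

/-- The paper's `f(v_{j+1})`, for `j < n / 2`. -/
def halfLabel (n j : ℕ) : ℕ :=
  if j = 0 then n - 1 else if j = 1 then 2 * n + 1 else if j % 2 = 0 then j else n + j + 1

theorem halfLabel_le (hn : n = 2 * h) {j : ℕ} (hj : j < h) : halfLabel n j ≤ 2 * (n + 1) := by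
  unfold halfLabel
  split_ifs <;> omega

theorem adjacentSum_halfLabel_mem (hn : n = 2 * h) (hh : 3 ≤ h) {j : ℕ} (hj : j < h) :
    n + 1 ≤ adjacentSum h (n + 1) (halfLabel n) j ∧
      adjacentSum h (n + 1) (halfLabel n) j ≤ 3 * (n + 1) := by
  unfold adjacentSum halfLabel
  split_ifs <;> omega

theorem exists_halfLabel_eq (hn : n = 2 * h) (hh : 3 ≤ h) {t : ℕ} (ht1 : 1 ≤ t)
    (htn : t ≤ n) :
    ∃ j < h, halfLabel n j = t ∨ 2 * (n + 1) - halfLabel n j = t ∨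
      3 * (n + 1) - adjacentSum h (n + 1) (halfLabel n) j = t ∨
      adjacentSum h (n + 1) (halfLabel n) j - (n + 1) = t := by
  obtain rfl | rfl | rfl | rfl | ht | ht | ht | ht :
      t = 1 ∨ t = 3 ∨ t = n - 1 ∨ t = n ∨ (t % 2 = 0 ∧ t < h) ∨
      (t % 2 = 0 ∧ h ≤ t ∧ t ≤ h + 1) ∨ (t % 2 = 0 ∧ h + 1 < t ∧ t < n) ∨
      (t % 2 = 1 ∧ 3 < t ∧ t < n - 1) := by omega
  · exact ⟨1, by omega, by grind [adjacentSum, halfLabel]⟩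
  · exact ⟨0, by omega, by grind [adjacentSum, halfLabel]⟩
  · exact ⟨0, by omega, by grind [adjacentSum, halfLabel]⟩
  · exact ⟨1, by omega, by grind [adjacentSum, halfLabel]⟩
  · exact ⟨t, ht.2, by grind [adjacentSum, halfLabel]⟩
  · exact ⟨h - 1, by omega, by grind [adjacentSum, halfLabel]⟩
  · exact ⟨n + 1 - t, by omega, by grind [adjacentSum, halfLabel]⟩
  · exact ⟨t / 2, by omega, by grind [adjacentSum, halfLabel]⟩

end Construction

end MagicNGon

open MagicNGon

theorem even_magic_ngon_exists (n : ℕ) [NeZero n] (hev : n % 2 = 0) (hn : 4 ≤ n) :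
    ∃ (v m : ZMod n → ℕ) (c s : ℕ), IsMagicNGon n v m c s := by
  obtain ⟨h, rfl⟩ : ∃ h, n = 2 * h := ⟨n / 2, by omega⟩
  obtain rfl | hh : h = 2 ∨ 3 ≤ h := by omega
  -- for `n = 4` the vertex labels are `2, 4, 8, 6`
  · exact ⟨_, _, _, _, isMagicNGon_antipodalExtension (L := fun j => 2 * j + 2) rfl
      (by decide) (by decide) (by decide)⟩
  · exact ⟨_, _, _, _, isMagicNGon_antipodalExtension rfl (fun _ => halfLabel_le rfl)
      (fun _ => adjacentSum_halfLabel_mem rfl hh) (fun _ => exists_halfLabel_eq rfl hh)⟩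
end
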